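/- Let G = (S, 𝓕) be a local forest greedoid with rank function r, |S| = n, c : S → ℝ a non-negative valued weight function, w(A) = Σ_{x ∈ A} c(P_x^A) for every A ∈ 𝓕 (where c(P) = Σ_{y ∈ P} c(y)), and B_m a base of G of minimum w-value. Then there exist subsets U_1, U_2, …, U_n ⊆ S and corresponding values y(U_1), …, y(U_n) ∈ ℝ such that y(U_i) ≥ 0 for all 1 ≤ i ≤ n, Σ{y(U_i) : x ∈ U_i} = c(x) holds for every x ∈ S, and Σ_{i=1}^n (r(S) − r(S \ U_i)) · y(U_i) = w(B_m). -/
import Mathlib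


open Finset

variable {α : Type*} [DecidableEq α] [Fintype α]

/-- `X` is subfeasible: contained in some feasible set. -/
def Subfeasible (F : Set (Finset α)) (X : Finset α) : Prop :=
  ∃ Y ∈ F, X ⊆ Y

/-- Greedoid axioms: `∅` is feasible, and the exchange property. -/
def IsGreedoid (F : Set (Finset α)) : Prop :=
  (∅ : Finset α) ∈ F ∧
    ∀ X ∈ F, ∀ Y ∈ F, X.card < Y.card → ∃ y ∈ Y, y ∉ X ∧ insert y X ∈ F

/-- Local union property. -/
def LocalUnion (F : Set (Finset α)) : Prop :=
  ∀ A ∈ F, ∀ B ∈ F, Subfeasible F (A ∪ B) → A ∪ B ∈ F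

/-- Local intersection property. -/
def LocalInter (F : Set (Finset α)) : Prop :=
  ∀ A ∈ F, ∀ B ∈ F, Subfeasible F (A ∪ B) → A ∩ B ∈ F

/-- Local forest property. -/
def LocalForest (F : Set (Finset α)) : Prop :=
  ∀ A ∈ F, ∀ x y z : α,
    insert x A ∈ F → insert y A ∈ F → insert x (insert y A) ∈ F →
      insert z (insert x (insert y A)) ∈ F →
      insert z (insert x A) ∈ F ∨ insert z (insert y A) ∈ F

/-- The rank function of a greedoid: max cardinality of a feasible subset. -/
noncomputable def grank (F : Set (Finset α)) (A : Finset α) : ℕ :=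
  sSup {n : ℕ | ∃ X ∈ F, X ⊆ A ∧ X.card = n}

/-- A base: a feasible set of maximum size. -/
def IsBase (F : Set (Finset α)) (B : Finset α) : Prop :=
  B ∈ F ∧ ∀ C ∈ F, C.card ≤ B.card

/-- The set of continuations of a feasible set `A`. -/
def Gamma (F : Set (Finset α)) (A : Finset α) : Set α :=
  {x | x ∉ A ∧ insert x A ∈ F}

/-- `P` is the `x`-path in `A`: the unique inclusion-minimal feasible subset
of `A` containing `x`. -/
def IsPathIn (F : Set (Finset α)) (A : Finset α) (x : α) (P : Finset α) : Prop :=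
  P ∈ F ∧ P ⊆ A ∧ x ∈ P ∧ ∀ Q ∈ F, Q ⊆ A → x ∈ Q → P ⊆ Q

/-- `P` is a path. -/
def IsPath (F : Set (Finset α)) (P : Finset α) : Prop :=
  ∃ A ∈ F, ∃ x ∈ A, IsPathIn F A x P

/-- `l` is a feasible ordering (of the set of its elements): every prefix is feasible. -/
def FeasibleOrdering (F : Set (Finset α)) (l : List α) : Prop :=
  l.Nodup ∧ ∀ i : ℕ, (l.take i).toFinset ∈ F

/-- `B` is a greedy base for maximizing `w`. -/
def GreedyMaxBase (F : Set (Finset α)) (w : Finset α → ℝ) (B : Finset α) : Prop :=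
  IsBase F B ∧ ∃ l : List α, FeasibleOrdering F l ∧ l.toFinset = B ∧
    ∀ (i : ℕ) (hi : i < l.length), ∀ y ∈ Gamma F (l.take i).toFinset,
      w (insert y (l.take i).toFinset) ≤ w (insert (l.get ⟨i, hi⟩) (l.take i).toFinset)

/-- `B` is a greedy base for minimizing `w`. -/
def GreedyMinBase (F : Set (Finset α)) (w : Finset α → ℝ) (B : Finset α) : Prop :=
  IsBase F B ∧ ∃ l : List α, FeasibleOrdering F l ∧ l.toFinset = B ∧
    ∀ (i : ℕ) (hi : i < l.length), ∀ y ∈ Gamma F (l.take i).toFinset,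
      w (insert (l.get ⟨i, hi⟩) (l.take i).toFinset) ≤ w (insert y (l.take i).toFinset)

/-- The shadow vector of a feasible set `B`: `sh_B(x) = |B| - r(B \ {x})`. -/
noncomputable def shVec (F : Set (Finset α)) (B : Finset α) : α → ℝ :=
  fun x => (B.card : ℝ) - (grank F (B.erase x) : ℝ)

set_option linter.unusedSectionVars false
set_option maxHeartbeats 1000000

section Helpers10
variable {F : Set (Finset α)} {P : Finset α → α → Finset α}


variable {F : Set (Finset α)} {P : Finset α → α → Finset α}

lemma path_feas (hP : ∀ A ∈ F, ∀ x ∈ A, IsPathIn F A x (P A x))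
    {A : Finset α} {x : α} (hA : A ∈ F) (hx : x ∈ A) : P A x ∈ F :=
  (hP A hA x hx).1

lemma path_sub (hP : ∀ A ∈ F, ∀ x ∈ A, IsPathIn F A x (P A x))
    {A : Finset α} {x : α} (hA : A ∈ F) (hx : x ∈ A) : P A x ⊆ A :=
  (hP A hA x hx).2.1

lemma path_self (hP : ∀ A ∈ F, ∀ x ∈ A, IsPathIn F A x (P A x))
    {A : Finset α} {x : α} (hA : A ∈ F) (hx : x ∈ A) : x ∈ P A x :=
  (hP A hA x hx).2.2.1

lemma path_min (hP : ∀ A ∈ F, ∀ x ∈ A, IsPathIn F A x (P A x))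
    {A Q : Finset α} {x : α} (hA : A ∈ F) (hQ : Q ∈ F) (hQA : Q ⊆ A) (hxQ : x ∈ Q) :
    P A x ⊆ Q :=
  (hP A hA x (hQA hxQ)).2.2.2 Q hQ hQA hxQ

lemma path_stab (hI : LocalInter F) (hP : ∀ A ∈ F, ∀ x ∈ A, IsPathIn F A x (P A x))
    {A B : Finset α} {x : α} (hA : A ∈ F) (hB : B ∈ F) (hAB : A ⊆ B) (hx : x ∈ A) :
    P A x = P B x := by
  have h1 : P B x ⊆ P A x :=
    path_min hP hB (path_feas hP hA hx) ((path_sub hP hA hx).trans hAB) (path_self hP hA hx)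
  have h2 : P A x ∩ P B x ∈ F := by
    refine hI _ (path_feas hP hA hx) _ (path_feas hP hB (hAB hx)) ⟨B, hB, ?_⟩
    exact union_subset ((path_sub hP hA hx).trans hAB) (path_sub hP hB (hAB hx))
  have h3 : P A x ⊆ P A x ∩ P B x :=
    path_min hP hA h2 (inter_subset_left.trans (path_sub hP hA hx))
      (mem_inter.2 ⟨path_self hP hA hx, path_self hP hB (hAB hx)⟩)
  exact subset_antisymm (h3.trans inter_subset_right) h1

lemma path_nested (hP : ∀ A ∈ F, ∀ x ∈ A, IsPathIn F A x (P A x))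
    {A : Finset α} {x z : α} (hA : A ∈ F) (hx : x ∈ A) (hz : z ∈ P A x) :
    P A z ⊆ P A x :=
  path_min hP hA (path_feas hP hA hx) (path_sub hP hA hx) hz

lemma exists_feas_sub (hG : IsGreedoid F) {Q : Finset α} (hQ : Q ∈ F) :
    ∀ m, m ≤ Q.card → ∃ X, X ∈ F ∧ X ⊆ Q ∧ X.card = m := by
  intro m
  induction m with
  | zero => exact fun _ => ⟨∅, hG.1, empty_subset _, card_empty⟩
  | succ m ih =>
    intro h
    obtain ⟨X, hXF, hXQ, hXc⟩ := ih (by omega)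
    obtain ⟨y, hyQ, hyX, hins⟩ := hG.2 X hXF Q hQ (by omega)
    exact ⟨insert y X, hins, insert_subset hyQ hXQ,
      by rw [card_insert_of_notMem hyX, hXc]⟩

lemma path_erase_feas (hG : IsGreedoid F) (hP : ∀ A ∈ F, ∀ x ∈ A, IsPathIn F A x (P A x))
    {A : Finset α} {x : α} (hA : A ∈ F) (hx : x ∈ A) : (P A x).erase x ∈ F := by
  have hxP : x ∈ P A x := path_self hP hA hx
  have hc1 : 1 ≤ (P A x).card := card_pos.2 ⟨x, hxP⟩
  obtain ⟨X, hXF, hXQ, hXc⟩ := exists_feas_sub hG (path_feas hP hA hx) ((P A x).card - 1) (by omega)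
  have hxX : x ∉ X := by
    intro hxX
    have h := path_min hP hA hXF (hXQ.trans (path_sub hP hA hx)) hxX
    have := card_le_card h
    omega
  have hXe : X = (P A x).erase x := by
    apply eq_of_subset_of_card_le (subset_erase.2 ⟨hXQ, hxX⟩)
    rw [card_erase_of_mem hxP]
    omega
  rwa [← hXe]

lemma path_antisymm (hG : IsGreedoid F) (hP : ∀ A ∈ F, ∀ x ∈ A, IsPathIn F A x (P A x))
    {A : Finset α} {u v : α} (hA : A ∈ F) (hv : v ∈ A) (h1 : u ∈ P A v) (h2 : v ∈ P A u) :
    u = v := by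
  by_contra hne
  have hu : u ∈ A := path_sub hP hA hv h1
  have hEr : (P A u).erase u ∈ F := path_erase_feas hG hP hA hu
  have hsub : P A v ⊆ (P A u).erase u :=
    path_min hP hA hEr ((erase_subset _ _).trans (path_sub hP hA hu))
      (mem_erase.2 ⟨fun h => hne h.symm, h2⟩)
  exact notMem_erase u _ (hsub h1)

lemma biUnion_feas (hG : IsGreedoid F) (hU : LocalUnion F) (T : Finset α) (f : α → Finset α)
    {B : Finset α} (hB : B ∈ F) (hf : ∀ t ∈ T, f t ∈ F) (hfB : ∀ t ∈ T, f t ⊆ B) :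
    T.biUnion f ∈ F := by
  classical
  induction T using Finset.induction_on with
  | empty => simpa using hG.1
  | @insert a T haT ih =>
    rw [biUnion_insert]
    refine hU _ (hf a (mem_insert_self _ _)) _
      (ih (fun t ht => hf t (mem_insert_of_mem ht)) (fun t ht => hfB t (mem_insert_of_mem ht)))
      ⟨B, hB, ?_⟩
    exact union_subset (hfB a (mem_insert_self _ _))
      (biUnion_subset.2 (fun t ht => hfB t (mem_insert_of_mem ht)))


lemma erase_erase_comm' (s : Finset α) (a b : α) :
    (s.erase a).erase b = (s.erase b).erase a := by
  ext t; simp only [mem_erase]; tauto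

/-- In a local forest greedoid, removing the defining element from a path
yields the path of another element (the unique "parent"). -/
lemma erase_eq_path (hG : IsGreedoid F) (hU : LocalUnion F) (hLF : LocalForest F)
    (hP : ∀ A ∈ F, ∀ x ∈ A, IsPathIn F A x (P A x))
    {A : Finset α} {x : α} (hA : A ∈ F) (hx : x ∈ A)
    (hne : ((P A x).erase x).Nonempty) :
    ∃ w ∈ (P A x).erase x, (P A x).erase x = P A w := by
  classical
  set Q := P A x with hQdef
  set E := Q.erase x with hEdef
  have hQF : Q ∈ F := path_feas hP hA hx
  have hQA : Q ⊆ A := path_sub hP hA hx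
  have hxQ : x ∈ Q := path_self hP hA hx
  have hEF : E ∈ F := path_erase_feas hG hP hA hx
  have hEQ : E ⊆ Q := erase_subset _ _
  have hEA : E ⊆ A := hEQ.trans hQA
  have hxE : x ∉ E := notMem_erase _ _
  have hPE : ∀ w ∈ E, P A w ⊆ E := fun w hw => path_min hP hA hEF hEA hw
  -- maximal element w0
  obtain ⟨w0, hw0E, hw0max⟩ := E.exists_max_image (fun w => (P A w).card) hne
  have htop : ∀ v ∈ E, w0 ∈ P A v → v = w0 := by
    intro v hv hmem
    have h1 : P A w0 ⊆ P A v := path_nested hP hA (hEA hv) hmem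
    have h2 : P A w0 = P A v := eq_of_subset_of_card_le h1 (hw0max v hv)
    have hvv : v ∈ P A w0 := by rw [h2]; exact path_self hP hA (hEA hv)
    exact path_antisymm hG hP hA (hEA hw0E) hvv hmem
  by_cases hcover : E ⊆ P A w0
  · exact ⟨w0, hw0E, subset_antisymm hcover (hPE w0 hw0E)⟩
  · have hne' : (E \ P A w0).Nonempty := by
      rw [sdiff_nonempty]; exact hcover
    obtain ⟨u, huE', humax⟩ := (E \ P A w0).exists_max_image (fun w => (P A w).card) hne'
    have huE : u ∈ E := (mem_sdiff.1 huE').1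
    have hunP : u ∉ P A w0 := (mem_sdiff.1 huE').2
    have hutop : ∀ v ∈ E, u ∈ P A v → v = u := by
      intro v hv hmem
      by_cases hvP : v ∈ P A w0
      · exact absurd (path_nested hP hA (hEA hw0E) hvP hmem) hunP
      · have hv' : v ∈ E \ P A w0 := mem_sdiff.2 ⟨hv, hvP⟩
        have h1 : P A u ⊆ P A v := path_nested hP hA (hEA hv) hmem
        have h2 : P A u = P A v := eq_of_subset_of_card_le h1 (humax v hv')
        have hvv : v ∈ P A u := by rw [h2]; exact path_self hP hA (hEA hv)
        exact path_antisymm hG hP hA (hEA huE) hvv hmem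
    -- feasibility of subsets closed under paths
    have hsubF : ∀ (T : Finset α), T ⊆ E → (∀ v ∈ T, P A v ⊆ T) → T ∈ F := by
      intro T hTE hcl
      have hbu : T.biUnion (P A) ∈ F :=
        biUnion_feas hG hU T (P A) hEF (fun t ht => path_feas hP hA (hEA (hTE ht)))
          (fun t ht => (hcl t ht).trans hTE)
      have heq : T.biUnion (P A) = T := by
        apply subset_antisymm
        · intro z hz
          obtain ⟨t, ht, hzt⟩ := mem_biUnion.1 hz
          exact hcl t ht hzt
        · intro t ht
          exact mem_biUnion.2 ⟨t, ht, path_self hP hA (hEA (hTE ht))⟩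
      rwa [heq] at hbu
    have hw0u : w0 ≠ u := fun h => hunP (h ▸ path_self hP hA (hEA hw0E))
    have hS1 : E.erase u ∈ F := by
      refine hsubF _ (erase_subset _ _) ?_
      intro v hv
      have hv' := mem_erase.1 hv
      refine subset_erase.2 ⟨hPE v hv'.2, ?_⟩
      intro hup
      exact hv'.1 (hutop v hv'.2 hup)
    have hS2 : E.erase w0 ∈ F := by
      refine hsubF _ (erase_subset _ _) ?_
      intro v hv
      have hv' := mem_erase.1 hv
      refine subset_erase.2 ⟨hPE v hv'.2, ?_⟩
      intro hup
      exact hv'.1 (htop v hv'.2 hup)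
    have hS0 : (E.erase u).erase w0 ∈ F := by
      refine hsubF _ ((erase_subset _ _).trans (erase_subset _ _)) ?_
      intro v hv
      have hv1 := mem_erase.1 hv
      have hv2 := mem_erase.1 hv1.2
      refine subset_erase.2 ⟨?_, ?_⟩
      · refine subset_erase.2 ⟨hPE v hv2.2, ?_⟩
        intro hup
        exact hv2.1 (hutop v hv2.2 hup)
      · intro hup
        exact hv1.1 (htop v hv2.2 hup)
    -- set identities
    have hxu : x ≠ u := fun h => hxE (h ▸ huE)
    have hxw0 : x ≠ w0 := fun h => hxE (h ▸ hw0E)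
    have i1 : insert w0 ((E.erase u).erase w0) = E.erase u := by
      apply insert_erase
      exact mem_erase.2 ⟨hw0u, hw0E⟩
    have i2 : insert u ((E.erase u).erase w0) = E.erase w0 := by
      rw [erase_erase_comm']
      apply insert_erase
      exact mem_erase.2 ⟨fun h => hw0u h.symm, huE⟩
    have i3 : insert w0 (insert u ((E.erase u).erase w0)) = E := by
      rw [i2]
      exact insert_erase hw0E
    have i4 : insert x E = Q := insert_erase hxQ
    have hlf := hLF ((E.erase u).erase w0) hS0 w0 u x
      (by rw [i1]; exact hS1) (by rw [i2]; exact hS2)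
      (by rw [i2, insert_erase hw0E]; exact hEF)
      (by rw [i2, insert_erase hw0E, i4]; exact hQF)
    rcases hlf with h | h
    · rw [i1] at h
      -- insert x (E.erase u) = Q.erase u ∈ F : contradiction
      have hins : insert x (E.erase u) = Q.erase u := by
        rw [hEdef, erase_erase_comm', insert_erase (mem_erase.2 ⟨hxu, hxQ⟩)]
      rw [hins] at h
      have hQsub : Q ⊆ Q.erase u :=
        path_min hP hA h ((erase_subset _ _).trans hQA) (mem_erase.2 ⟨hxu, hxQ⟩)
      exact absurd (hQsub (hEQ huE)) (notMem_erase u Q)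
    · rw [i2] at h
      have hins : insert x (E.erase w0) = Q.erase w0 := by
        rw [hEdef, erase_erase_comm', insert_erase (mem_erase.2 ⟨hxw0, hxQ⟩)]
      rw [hins] at h
      have hQsub : Q ⊆ Q.erase w0 :=
        path_min hP hA h ((erase_subset _ _).trans hQA) (mem_erase.2 ⟨hxw0, hxQ⟩)
      exact absurd (hQsub (hEQ hw0E)) (notMem_erase w0 Q)

/-- The greedy algorithm: an existence statement. -/
lemma exists_greedy [Nonempty α] (hG : IsGreedoid F) (v : Finset α → α → ℝ) :
    ∃ (r : ℕ) (A : ℕ → Finset α) (xs : ℕ → α), A 0 = ∅ ∧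
      (∀ k, k < r → xs (k+1) ∈ Gamma F (A k) ∧ A (k+1) = insert (xs (k+1)) (A k) ∧
        ∀ z ∈ Gamma F (A k), v (A k) (xs (k+1)) ≤ v (A k) z) ∧
      Gamma F (A r) = ∅ := by
  classical
  suffices h : ∀ (fuel : ℕ) (A0 : Finset α), A0 ∈ F → (Finset.univ (α := α)).card - A0.card ≤ fuel →
      ∃ (r : ℕ) (A : ℕ → Finset α) (xs : ℕ → α), A 0 = A0 ∧
      (∀ k, k < r → xs (k+1) ∈ Gamma F (A k) ∧ A (k+1) = insert (xs (k+1)) (A k) ∧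
        ∀ z ∈ Gamma F (A k), v (A k) (xs (k+1)) ≤ v (A k) z) ∧
      Gamma F (A r) = ∅ by
    exact h (Finset.univ (α := α)).card (∅ : Finset α) hG.1 (by simp)
  intro fuel
  induction fuel with
  | zero =>
    intro A0 hA0 hle
    refine ⟨0, fun _ => A0, fun _ => Classical.arbitrary α, rfl,
      fun k hk => absurd hk (Nat.not_lt_zero k), ?_⟩
    have hcard : (Finset.univ (α := α)).card ≤ A0.card := by omega
    have : A0 = univ := eq_of_subset_of_card_le (subset_univ A0) hcard
    subst this
    ext z
    simp only [Set.mem_empty_iff_false, iff_false]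
    intro hz
    exact hz.1 (mem_univ z)
  | succ fuel ih =>
    intro A0 hA0 hle
    by_cases hstop : Gamma F A0 = ∅
    · exact ⟨0, fun _ => A0, fun _ => Classical.arbitrary α, rfl,
        fun k hk => absurd hk (Nat.not_lt_zero k), hstop⟩
    · have hne : (univ.filter (· ∈ Gamma F A0)).Nonempty := by
        rw [Set.eq_empty_iff_forall_notMem] at hstop
        push_neg at hstop
        obtain ⟨z, hz⟩ := hstop
        exact ⟨z, mem_filter.2 ⟨mem_univ z, hz⟩⟩
      obtain ⟨z, hzmem, hzmin⟩ := Finset.exists_min_image _ (v A0) hne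
      have hzG : z ∈ Gamma F A0 := (mem_filter.1 hzmem).2
      have hcard : (Finset.univ (α := α)).card - (insert z A0).card ≤ fuel := by
        have h1 := Finset.card_insert_of_notMem hzG.1
        have h2 := Finset.card_le_univ (insert z A0)
        omega
      obtain ⟨r', A', xs', hA'0, hstep', hstop'⟩ := ih (insert z A0) hzG.2 hcard
      refine ⟨r' + 1,
        fun k => match k with | 0 => A0 | (k+1) => A' k,
        fun k => match k with | 0 => z | 1 => z | (k+2) => xs' (k+1),
        rfl, ?_, hstop'⟩
      intro k hk
      match k with
      | 0 =>
        refine ⟨hzG, by simpa using hA'0, ?_⟩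
        intro z' hz'
        exact hzmin z' (mem_filter.2 ⟨mem_univ z', hz'⟩)
      | (k+1) =>
        exact hstep' k (by omega)

lemma abel_sum (g : ℕ → ℝ) (hg0 : g 0 = 0) :
    ∀ m : ℕ, ∑ j ∈ range m, ((m : ℝ) - (j : ℝ)) * (g (j+1) - g j) = ∑ j ∈ range m, g (j+1) := by
  intro m
  induction m with
  | zero => simp
  | succ m ih =>
    have key : ∀ j ∈ range (m+1), ((m+1 : ℕ) : ℝ) * (g (j+1) - g j) - (j:ℝ) * (g (j+1) - g j)
        = ((m : ℝ) - (j : ℝ)) * (g (j+1) - g j) + (g (j+1) - g j) := by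
      intro j _
      push_cast
      ring
    calc ∑ j ∈ range (m+1), (((m+1 : ℕ) : ℝ) - (j : ℝ)) * (g (j+1) - g j)
        = ∑ j ∈ range (m+1), (((m : ℝ) - (j : ℝ)) * (g (j+1) - g j) + (g (j+1) - g j)) := by
          refine Finset.sum_congr rfl ?_
          intro j hj
          push_cast
          ring
      _ = (∑ j ∈ range (m+1), ((m : ℝ) - (j : ℝ)) * (g (j+1) - g j))
            + (∑ j ∈ range (m+1), (g (j+1) - g j)) := Finset.sum_add_distrib
      _ = (∑ j ∈ range m, ((m : ℝ) - (j : ℝ)) * (g (j+1) - g j)) + (g (m+1) - g 0) := by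
          rw [Finset.sum_range_succ, Finset.sum_range_sub g]
          simp
      _ = ∑ j ∈ range (m+1), g (j+1) := by
          rw [ih, Finset.sum_range_succ, hg0]
          ring

lemma le_grank {F : Set (Finset α)} (X : Finset α) (hX : X ∈ F) {A : Finset α} (hXA : X ⊆ A) :
    X.card ≤ grank F A := by
  apply le_csSup
  · refine ⟨(Finset.univ (α := α)).card, ?_⟩
    rintro n ⟨Y, _, _, hc⟩
    exact hc ▸ card_le_univ Y
  · exact ⟨X, hX, hXA, rfl⟩

lemma grank_le {F : Set (Finset α)} (h0 : (∅ : Finset α) ∈ F) {A : Finset α} {m : ℕ}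
    (h : ∀ X ∈ F, X ⊆ A → X.card ≤ m) : grank F A ≤ m := by
  have h0' : (0 : ℕ) ∈ {n : ℕ | ∃ X ∈ F, X ⊆ A ∧ X.card = n} := ⟨∅, h0, empty_subset _, card_empty⟩
  apply csSup_le ⟨0, h0'⟩
  rintro n ⟨Y, hY, hYA, hc⟩
  exact hc ▸ h Y hY hYA

/-- Weak duality counting lemma. -/
lemma count_ge (hG : IsGreedoid F) (hU : LocalUnion F)
    (hP : ∀ A ∈ F, ∀ x ∈ A, IsPathIn F A x (P A x))
    {Bm : Finset α} (hBm : Bm ∈ F) (U : Finset α) :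
    (Bm.card : ℝ) - (grank F (univ \ U) : ℝ) ≤
      ∑ xx ∈ Bm, (((P Bm xx).filter (· ∈ U)).card : ℝ) := by
  classical
  set D := Bm.filter (fun xx => ((P Bm xx).filter (· ∈ U)) = ∅) with hD
  have hDBm : D ⊆ Bm := filter_subset _ _
  have hDF : D ∈ F := by
    have hb : D.biUnion (P Bm) ∈ F :=
      biUnion_feas hG hU D (P Bm) hBm (fun t ht => path_feas hP hBm (hDBm ht))
        (fun t ht => path_sub hP hBm (hDBm ht))
    have heq : D.biUnion (P Bm) = D := by
      apply subset_antisymm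
      · intro zz hz
        obtain ⟨t, ht, hzt⟩ := mem_biUnion.1 hz
        have htB := hDBm ht
        have hzB : zz ∈ Bm := path_sub hP hBm htB hzt
        refine mem_filter.2 ⟨hzB, ?_⟩
        rw [Finset.filter_eq_empty_iff]
        intro b hb hbU
        have hsub : P Bm zz ⊆ P Bm t := path_nested hP hBm htB hzt
        have := (mem_filter.1 ht).2
        rw [Finset.filter_eq_empty_iff] at this
        exact this (hsub hb) hbU
      · intro t ht
        exact mem_biUnion.2 ⟨t, ht, path_self hP hBm (hDBm ht)⟩
    rwa [heq] at hb
  have hDsub : D ⊆ univ \ U := by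
    intro t ht
    refine mem_sdiff.2 ⟨mem_univ t, ?_⟩
    intro htU
    have := (mem_filter.1 ht).2
    rw [Finset.filter_eq_empty_iff] at this
    exact this (path_self hP hBm (hDBm ht)) htU
  have h1 : D.card ≤ grank F (univ \ U) := le_grank D hDF hDsub
  have h2 : (Bm \ D).card ≤ ∑ xx ∈ Bm, ((P Bm xx).filter (· ∈ U)).card := by
    calc (Bm \ D).card = ∑ _xx ∈ Bm \ D, 1 := by simp
    _ ≤ ∑ xx ∈ Bm \ D, ((P Bm xx).filter (· ∈ U)).card := by
        refine Finset.sum_le_sum ?_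
        intro xx hxx
        have hx1 := mem_sdiff.1 hxx
        have : ((P Bm xx).filter (· ∈ U)) ≠ ∅ := by
          intro hemp
          exact hx1.2 (mem_filter.2 ⟨hx1.1, hemp⟩)
        have := Finset.nonempty_iff_ne_empty.2 this
        exact Nat.one_le_iff_ne_zero.2 (Finset.card_ne_zero_of_mem this.choose_spec)
    _ ≤ ∑ xx ∈ Bm, ((P Bm xx).filter (· ∈ U)).card :=
        Finset.sum_le_sum_of_subset sdiff_subset
  have h3 : (Bm \ D).card = Bm.card - D.card := card_sdiff_of_subset hDBm
  have h4 := card_le_card hDBm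
  have h2' : ((Bm \ D).card : ℝ) ≤ ∑ xx ∈ Bm, (((P Bm xx).filter (· ∈ U)).card : ℝ) := by
    exact_mod_cast h2
  have h1' : (D.card : ℝ) ≤ (grank F (univ \ U) : ℝ) := by exact_mod_cast h1
  have h3' : ((Bm \ D).card : ℝ) = (Bm.card : ℝ) - (D.card : ℝ) := by
    rw [h3]; push_cast [h4]; ring
  linarith

end Helpers10

/-- Existence of an optimal dual solution for local forest greedoids. -/
theorem statement10 (F : Set (Finset α)) (hG : IsGreedoid F)
    (hU : LocalUnion F) (hI : LocalInter F) (hLF : LocalForest F)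
    (c : α → ℝ) (hc : ∀ s, 0 ≤ c s)
    (P : Finset α → α → Finset α)
    (hP : ∀ A ∈ F, ∀ x ∈ A, IsPathIn F A x (P A x))
    (w : Finset α → ℝ) (hw : ∀ A ∈ F, w A = ∑ x ∈ A, ∑ y ∈ P A x, c y)
    (Bm : Finset α) (hBm : IsBase F Bm) (hmin : ∀ B, IsBase F B → w Bm ≤ w B) :
    ∃ (U : Fin (Fintype.card α) → Finset α) (y : Fin (Fintype.card α) → ℝ),
      (∀ i, 0 ≤ y i) ∧
      (∀ x : α, ∑ i ∈ Finset.univ.filter (fun i => x ∈ U i), y i = c x) ∧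
      (∑ i : Fin (Fintype.card α),
        ((grank F Finset.univ : ℝ) - (grank F (Finset.univ \ U i) : ℝ)) * y i = w Bm) := by
  classical
  rcases isEmpty_or_nonempty α with hα | hα
  · refine ⟨fun _ => ∅, fun _ => 0, fun _ => le_refl 0, fun x => (hα.elim x), ?_⟩
    have hBme : Bm = ∅ := Finset.eq_empty_of_forall_notMem (fun x => (hα.elim x))
    rw [Finset.sum_eq_zero (fun i _ => mul_zero _), hw Bm hBm.1, hBme, sum_empty]
  · obtain ⟨r, A, xs, hA0, hstep, hstop⟩ :=
      exists_greedy hG (fun B z => ∑ yy ∈ P (insert z B) z, c yy)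
    have hxsG : ∀ k, k < r → xs (k+1) ∈ Gamma F (A k) := fun k hk => (hstep k hk).1
    have hxsnot : ∀ k, k < r → xs (k+1) ∉ A k := fun k hk => (hxsG k hk).1
    have hAins : ∀ k, k < r → A (k+1) = insert (xs (k+1)) (A k) := fun k hk => (hstep k hk).2.1
    have hgmin : ∀ k, k < r → ∀ z ∈ Gamma F (A k),
        (∑ yy ∈ P (A (k+1)) (xs (k+1)), c yy) ≤ ∑ yy ∈ P (insert z (A k)) z, c yy := by
      intro k hk z hz
      have h := (hstep k hk).2.2 z hz
      rwa [← hAins k hk] at h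
    have hFk : ∀ k, k ≤ r → A k ∈ F := by
      intro k
      induction k with
      | zero => intro _; rw [hA0]; exact hG.1
      | succ k ih =>
        intro hk
        rw [hAins k (by omega)]
        exact (hxsG k (by omega)).2
    have hmono : ∀ j k, j ≤ k → k ≤ r → A j ⊆ A k := by
      intro j k hjk hkr
      induction hjk with
      | refl => exact subset_rfl
      | @step k hk ih =>
        refine (ih (by omega)).trans ?_
        rw [hAins k (by omega)]
        exact subset_insert _ _
    have hcardA : ∀ k, k ≤ r → (A k).card = k := by
      intro k
      induction k with
      | zero => intro _; rw [hA0]; exact card_empty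
      | succ k ih =>
        intro hk
        rw [hAins k (by omega), card_insert_of_notMem (hxsnot k (by omega)), ih (by omega)]
    have hxmem : ∀ k, k < r → xs (k+1) ∈ A (k+1) := by
      intro k hk
      rw [hAins k hk]
      exact mem_insert_self _ _
    set d : ℕ → ℝ := fun k => if k = 0 then 0 else ∑ yy ∈ P (A k) (xs k), c yy with hd
    have hd0 : d 0 = 0 := by simp [hd]
    have hdpos : ∀ k, k ≠ 0 → d k = ∑ yy ∈ P (A k) (xs k), c yy := by
      intro k hk
      simp [hd, hk]
    have hdsucc : ∀ k : ℕ, d (k+1) = ∑ yy ∈ P (A (k+1)) (xs (k+1)), c yy := fun k =>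
      hdpos (k+1) (Nat.succ_ne_zero k)
    have hstab : ∀ j k z, j ≤ k → k ≤ r → z ∈ Gamma F (A j) → z ∈ Gamma F (A k) →
        P (insert z (A j)) z = P (insert z (A k)) z := by
      intro j k z hjk hkr hzj hzk
      exact path_stab hI hP hzj.2 hzk.2
        (insert_subset_insert _ (hmono j k hjk hkr)) (mem_insert_self _ _)
    have hdstep : ∀ k, k < r → d k ≤ d (k+1) := by
      intro k hk
      rcases Nat.eq_zero_or_pos k with h0 | hpos
      · subst h0
        rw [hd0, hdsucc]
        exact Finset.sum_nonneg (fun _ _ => hc _)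
      · have hk1 : k - 1 < r := by omega
        have hkk : k - 1 + 1 = k := by omega
        have hzG := hxsG k hk
        have hAkeq : A k = insert (xs k) (A (k-1)) := by
          have h := hAins (k-1) hk1
          rwa [hkk] at h
        have hdk : d k = ∑ yy ∈ P (A k) (xs k), c yy := hdpos k (by omega)
        by_cases hzprev : xs (k+1) ∈ Gamma F (A (k-1))
        · have hle := hgmin (k-1) hk1 (xs (k+1)) hzprev
          rw [hkk] at hle
          have hst := hstab (k-1) k (xs (k+1)) (by omega) (le_of_lt hk) hzprev hzG
          rw [hst, ← hAins k hk] at hle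
          rw [hdk, hdsucc]
          exact hle
        · have hk1r : A (k+1) ∈ F := hFk (k+1) hk
          have hzA1 : xs (k+1) ∈ A (k+1) := hxmem k hk
          have hxkQ : xs k ∈ P (A (k+1)) (xs (k+1)) := by
            by_contra hnot
            have hQsub : P (A (k+1)) (xs (k+1)) ⊆ insert (xs (k+1)) (A (k-1)) := by
              intro b hb
              have hbA : b ∈ A (k+1) := path_sub hP hk1r hzA1 hb
              rw [hAins k hk, mem_insert] at hbA
              rcases hbA with h | h
              · exact h ▸ mem_insert_self _ _
              · rw [hAkeq, mem_insert] at h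
                rcases h with h | h
                · exact absurd (h ▸ hb) hnot
                · exact mem_insert_of_mem h
            have hun : A (k-1) ∪ P (A (k+1)) (xs (k+1)) = insert (xs (k+1)) (A (k-1)) := by
              apply subset_antisymm
              · exact union_subset (subset_insert _ _) hQsub
              · intro b hb
                rw [mem_insert] at hb
                rcases hb with h | h
                · subst h
                  exact mem_union_right _ (path_self hP hk1r hzA1)
                · exact mem_union_left _ h
            have hins : insert (xs (k+1)) (A (k-1)) ∈ F := by
              rw [← hun]
              refine hU _ (hFk (k-1) (by omega)) _ (path_feas hP hk1r hzA1)
                ⟨A (k+1), hk1r, ?_⟩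
              exact union_subset (hmono (k-1) (k+1) (by omega) hk) (path_sub hP hk1r hzA1)
            exact hzprev ⟨fun hmem => hzG.1 (hmono (k-1) k (by omega) (le_of_lt hk) hmem), hins⟩
          have h1 : P (A (k+1)) (xs k) ⊆ P (A (k+1)) (xs (k+1)) :=
            path_nested hP hk1r hzA1 hxkQ
          have hxkAk : xs k ∈ A k := by
            rw [hAkeq]
            exact mem_insert_self _ _
          have h2 : P (A k) (xs k) = P (A (k+1)) (xs k) :=
            path_stab hI hP (hFk k (le_of_lt hk)) hk1r (hmono k (k+1) (by omega) hk) hxkAk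
          rw [hdk, hdsucc, h2]
          exact Finset.sum_le_sum_of_subset_of_nonneg h1 (fun b _ _ => hc b)
    have hdmono : ∀ j k, j ≤ k → k ≤ r → d j ≤ d k := by
      intro j k hjk hkr
      induction hjk with
      | refl => exact le_refl _
      | @step k hk ih => exact (ih (by omega)).trans (hdstep k (by omega))
    set km : α → ℕ := fun a => sInf {j | a ∈ A j} with hkm
    have hkmspec : ∀ a ∈ A r, a ∈ A (km a) ∧ km a ≤ r ∧ 1 ≤ km a ∧ a ∉ A (km a - 1) ∧
        xs (km a) = a ∧ a ∈ Gamma F (A (km a - 1)) := by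
      intro a ha
      have hne : {j | a ∈ A j}.Nonempty := ⟨r, ha⟩
      have h1 : a ∈ A (km a) := Nat.sInf_mem hne
      have h2 : km a ≤ r := Nat.sInf_le ha
      have h3 : 1 ≤ km a := by
        rcases Nat.eq_zero_or_pos (km a) with h | h
        · rw [h, hA0] at h1
          exact absurd h1 (notMem_empty a)
        · exact h
      have h4 : a ∉ A (km a - 1) := by
        have hlt : km a - 1 < km a := by omega
        exact Nat.notMem_of_lt_sInf hlt
      have h5 : A (km a) = insert (xs (km a)) (A (km a - 1)) := by
        have h := hAins (km a - 1) (by omega)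
        rwa [Nat.sub_add_cancel h3] at h
      have h6 : xs (km a) = a := by
        rcases mem_insert.1 (h5 ▸ h1) with h | h
        · exact h.symm
        · exact absurd h h4
      refine ⟨h1, h2, h3, h4, h6, h4, ?_⟩
      rw [h6] at h5
      rw [← h5]
      exact hFk (km a) h2
    have hkmxs : ∀ j, j < r → km (xs (j+1)) = j + 1 := by
      intro j hj
      have hmem : xs (j+1) ∈ A (j+1) := hxmem j hj
      have hle : km (xs (j+1)) ≤ j + 1 := Nat.sInf_le hmem
      have hin : xs (j+1) ∈ A (km (xs (j+1))) :=
        Nat.sInf_mem (⟨j+1, hmem⟩ : {i | xs (j+1) ∈ A i}.Nonempty)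
      by_contra hneq
      have hlt : km (xs (j+1)) ≤ j := by omega
      exact hxsnot j hj (hmono _ j hlt (le_of_lt hj) hin)
    set cov : α → ℝ :=
      fun zz => ∑ j ∈ range r, (if zz ∈ Gamma F (A j) then d (j+1) - d j else 0) with hcov
    have hJstruct : ∀ zz : α,
        ∀ hne : ((range r).filter (fun j => zz ∈ Gamma F (A j))).Nonempty,
        cov zz = d (((range r).filter (fun j => zz ∈ Gamma F (A j))).max' hne + 1)
            - d (((range r).filter (fun j => zz ∈ Gamma F (A j))).min' hne) ∧
        (∑ yy ∈ P (insert zz (A (((range r).filter (fun j => zz ∈ Gamma F (A j))).max' hne))) zz,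
            c yy)
          = d (((range r).filter (fun j => zz ∈ Gamma F (A j))).min' hne) + c zz := by
      intro zz hne
      set Jf := (range r).filter (fun j => zz ∈ Gamma F (A j)) with hJf
      set s := Jf.min' hne with hsdef
      set t := Jf.max' hne with htdef
      have hsJ : s ∈ Jf := Jf.min'_mem hne
      have htJ : t ∈ Jf := Jf.max'_mem hne
      have hsG : zz ∈ Gamma F (A s) := (mem_filter.1 hsJ).2
      have htG : zz ∈ Gamma F (A t) := (mem_filter.1 htJ).2
      have hsr : s < r := mem_range.1 (mem_filter.1 hsJ).1
      have htr : t < r := mem_range.1 (mem_filter.1 htJ).1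
      have hst : s ≤ t := Jf.min'_le t htJ
      have hIcc : Jf = Icc s t := by
        apply subset_antisymm
        · intro j hj
          exact mem_Icc.2 ⟨Jf.min'_le j hj, Jf.le_max' j hj⟩
        · intro j hj
          obtain ⟨hj1, hj2⟩ := mem_Icc.1 hj
          have hjr : j < r := by omega
          have hzAj : zz ∉ A j := fun hmem => htG.1 (hmono j t hj2 (le_of_lt htr) hmem)
          have hun : insert zz (A s) ∪ A j = insert zz (A j) := by
            apply subset_antisymm
            · refine union_subset ?_ (subset_insert _ _)
              refine insert_subset (mem_insert_self _ _) ?_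
              exact (hmono s j hj1 (le_of_lt hjr)).trans (subset_insert _ _)
            · intro b hb
              rw [mem_insert] at hb
              rcases hb with rfl | h
              · exact mem_union_left _ (mem_insert_self _ _)
              · exact mem_union_right _ h
          have hins : insert zz (A j) ∈ F := by
            rw [← hun]
            refine hU _ hsG.2 _ (hFk j (le_of_lt hjr)) ⟨insert zz (A t), htG.2, ?_⟩
            rw [hun]
            exact insert_subset_insert _ (hmono j t hj2 (le_of_lt htr))
          exact mem_filter.2 ⟨mem_range.2 hjr, hzAj, hins⟩
      have hc1 : cov zz = d (t+1) - d s := by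
        calc cov zz = ∑ j ∈ Jf, (d (j+1) - d j) := by
              rw [hJf, Finset.sum_filter]
            _ = ∑ j ∈ Ico s (t+1), (d (j+1) - d j) := by rw [hIcc, Finset.Ico_add_one_right_eq_Icc]
            _ = (∑ j ∈ range (t+1), (d (j+1) - d j)) - (∑ j ∈ range s, (d (j+1) - d j)) :=
              Finset.sum_Ico_eq_sub _ (by omega)
            _ = d (t+1) - d s := by
              rw [Finset.sum_range_sub d, Finset.sum_range_sub d, hd0]
              ring
      refine ⟨hc1, ?_⟩
      have hQsF : insert zz (A s) ∈ F := hsG.2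
      have hzzA : zz ∈ insert zz (A s) := mem_insert_self _ _
      have hQsF' : P (insert zz (A s)) zz ∈ F := path_feas hP hQsF hzzA
      have hzzQ : zz ∈ P (insert zz (A s)) zz := path_self hP hQsF hzzA
      have hstq : P (insert zz (A t)) zz = P (insert zz (A s)) zz :=
        (hstab s t zz hst (le_of_lt htr) hsG htG).symm
      have hsplit : ∑ yy ∈ P (insert zz (A s)) zz, c yy
          = c zz + ∑ yy ∈ (P (insert zz (A s)) zz).erase zz, c yy :=
        (Finset.add_sum_erase _ c hzzQ).symm
      rcases ((P (insert zz (A s)) zz).erase zz).eq_empty_or_nonempty with hemp | hner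
      · have hQsing : P (insert zz (A s)) zz = {zz} := by
          apply subset_antisymm
          · intro b hb
            rcases eq_or_ne b zz with rfl | h
            · exact mem_singleton_self b
            · exact absurd (mem_erase.2 ⟨h, hb⟩) (by rw [hemp]; exact notMem_empty b)
          · exact singleton_subset_iff.2 hzzQ
        have h0J : (0:ℕ) ∈ Jf := by
          refine mem_filter.2 ⟨mem_range.2 (by omega), ?_, ?_⟩
          · rw [hA0]
            exact notMem_empty zz
          · rw [hA0, show insert zz (∅:Finset α) = {zz} by simp, ← hQsing]
            exact hQsF'
        have hs0 : s = 0 := Nat.le_zero.1 (Jf.min'_le 0 h0J)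
        rw [hstq, hsplit, hemp, sum_empty, hs0, hd0]
        ring
      · obtain ⟨ww, hwE, hEeq⟩ := erase_eq_path hG hU hLF hP hQsF hzzA hner
        have hwne : ww ≠ zz := (mem_erase.1 hwE).1
        have hwAs : ww ∈ A s := by
          have hm := path_sub hP hQsF hzzA (mem_of_mem_erase hwE)
          rw [mem_insert] at hm
          rcases hm with h | h
          · exact absurd h hwne
          · exact h
        have hwAr : ww ∈ A r := hmono s r (le_of_lt hsr) le_rfl hwAs
        obtain ⟨hn1, hn2, hn3, hn4, hn5, hn6⟩ := hkmspec ww hwAr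
        have hmles : km ww ≤ s := Nat.sInf_le hwAs
        have hPm : P (insert zz (A s)) ww = P (A (km ww)) ww := by
          refine (path_stab hI hP (hFk (km ww) hn2) hQsF ?_ hn1).symm
          exact (hmono (km ww) s hmles (le_of_lt hsr)).trans (subset_insert _ _)
        have hsum2 : ∑ yy ∈ (P (insert zz (A s)) zz).erase zz, c yy = d (km ww) := by
          rw [hEeq, hPm, hdpos (km ww) (by omega), hn5]
        have hQsub2 : P (insert zz (A s)) zz ⊆ insert zz (A (km ww)) := by
          intro b hb
          rcases eq_or_ne b zz with rfl | h
          · exact mem_insert_self _ _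
          · have hb' : b ∈ (P (insert zz (A s)) zz).erase zz := mem_erase.2 ⟨h, hb⟩
            rw [hEeq, hPm] at hb'
            exact mem_insert_of_mem (path_sub hP (hFk (km ww) hn2) hn1 hb')
        have hun2 : A (km ww) ∪ P (insert zz (A s)) zz = insert zz (A (km ww)) := by
          apply subset_antisymm
          · exact union_subset (subset_insert _ _) hQsub2
          · intro b hb
            rw [mem_insert] at hb
            rcases hb with rfl | h
            · exact mem_union_right _ hzzQ
            · exact mem_union_left _ h
        have hins2 : insert zz (A (km ww)) ∈ F := by
          rw [← hun2]
          refine hU _ (hFk (km ww) hn2) _ hQsF' ⟨insert zz (A s), hQsF, ?_⟩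
          exact union_subset ((hmono (km ww) s hmles (le_of_lt hsr)).trans (subset_insert _ _))
            (path_sub hP hQsF hzzA)
        have hmJ : km ww ∈ Jf := by
          refine mem_filter.2 ⟨mem_range.2 (by omega), ?_, hins2⟩
          intro hmem
          exact hsG.1 (hmono (km ww) s hmles (le_of_lt hsr) hmem)
        have hseq : km ww = s := le_antisymm hmles (Jf.min'_le _ hmJ)
        rw [hstq, hsplit, hsum2, hseq]
        ring
    have hcovle : ∀ zz : α, cov zz ≤ c zz := by
      intro zz
      by_cases hne : ((range r).filter (fun j => zz ∈ Gamma F (A j))).Nonempty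
      · obtain ⟨h1, h2⟩ := hJstruct zz hne
        have htJ := Finset.max'_mem _ hne
        have htG : zz ∈ Gamma F (A (((range r).filter (fun j => zz ∈ Gamma F (A j))).max' hne)) :=
          (mem_filter.1 htJ).2
        have htr : ((range r).filter (fun j => zz ∈ Gamma F (A j))).max' hne < r :=
          mem_range.1 (mem_filter.1 htJ).1
        have hgr : d (((range r).filter (fun j => zz ∈ Gamma F (A j))).max' hne + 1)
            ≤ ∑ yy ∈ P (insert zz
                (A (((range r).filter (fun j => zz ∈ Gamma F (A j))).max' hne))) zz, c yy := by
          rw [hdsucc]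
          exact hgmin _ htr zz htG
        rw [h2] at hgr
        rw [h1]
        linarith
      · have hemp : (range r).filter (fun j => zz ∈ Gamma F (A j)) = ∅ :=
          not_nonempty_iff_eq_empty.1 hne
        have hcz : cov zz = 0 := by
          simp only [hcov]
          apply Finset.sum_eq_zero
          intro j hj
          rw [if_neg]
          intro hmem
          have hmem' : j ∈ (range r).filter (fun j => zz ∈ Gamma F (A j)) :=
            mem_filter.2 ⟨hj, hmem⟩
          rw [hemp] at hmem'
          exact notMem_empty j hmem'
        rw [hcz]
        exact hc zz
    have hcoveq : ∀ zz ∈ A r, cov zz = c zz := by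
      intro zz hzz
      obtain ⟨hm1, hm2, hm3, hm4, hm5, hm6⟩ := hkmspec zz hzz
      have hJmem : km zz - 1 ∈ (range r).filter (fun j => zz ∈ Gamma F (A j)) :=
        mem_filter.2 ⟨mem_range.2 (by omega), hm6⟩
      have hne : ((range r).filter (fun j => zz ∈ Gamma F (A j))).Nonempty := ⟨_, hJmem⟩
      obtain ⟨h1, h2⟩ := hJstruct zz hne
      have hteq : ((range r).filter (fun j => zz ∈ Gamma F (A j))).max' hne = km zz - 1 := by
        refine le_antisymm (Finset.max'_le _ _ _ ?_) (Finset.le_max' _ _ hJmem)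
        intro j hj
        have hjG : zz ∈ Gamma F (A j) := (mem_filter.1 hj).2
        have hjr : j < r := mem_range.1 (mem_filter.1 hj).1
        by_contra hlt
        push_neg at hlt
        exact hjG.1 (hmono (km zz) j (by omega) (le_of_lt hjr) hm1)
      rw [hteq] at h1 h2
      have hk1 : km zz - 1 + 1 = km zz := by omega
      rw [hk1] at h1
      have hins : insert zz (A (km zz - 1)) = A (km zz) := by
        have h := hAins (km zz - 1) (by omega)
        rw [Nat.sub_add_cancel hm3, hm5] at h
        exact h.symm
      have hdk : d (km zz) = ∑ yy ∈ P (insert zz (A (km zz - 1))) zz, c yy := by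
        rw [hdpos (km zz) (by omega), hins, hm5]
      rw [← hdk] at h2
      rw [h1, h2]
      ring
    have hsumA : ∀ (G : α → ℝ), ∀ k, k ≤ r → ∑ a ∈ A k, G a = ∑ j ∈ range k, G (xs (j+1)) := by
      intro G k
      induction k with
      | zero => intro _; rw [hA0]; simp
      | succ k ih =>
        intro hk
        rw [hAins k (by omega), sum_insert (hxsnot k (by omega)), sum_range_succ,
          ih (by omega), add_comm]
    have hbase : ∀ C ∈ F, C.card ≤ r := by
      intro C hC
      by_contra hlt
      push_neg at hlt
      obtain ⟨y, hyC, hyA, hins⟩ := hG.2 (A r) (hFk r le_rfl) C hC (by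
        rw [hcardA r le_rfl]; omega)
      have hg : y ∈ Gamma F (A r) := ⟨hyA, hins⟩
      rw [hstop] at hg
      exact hg
    have hrankuniv : grank F univ = r := by
      refine le_antisymm (grank_le hG.1 (fun X hX _ => hbase X hX)) ?_
      have := le_grank (A r) (hFk r le_rfl) (subset_univ _)
      rwa [hcardA r le_rfl] at this
    have hcardBm : Bm.card = r := by
      refine le_antisymm (hbase Bm hBm.1) ?_
      have := hBm.2 (A r) (hFk r le_rfl)
      rwa [hcardA r le_rfl] at this
    have hrankcut : ∀ a ∈ A r,
        grank F (univ \ univ.filter (· ∈ Gamma F (A (km a - 1)))) = km a - 1 := by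
      intro a ha
      obtain ⟨hm1, hm2, hm3, hm4, hm5, hm6⟩ := hkmspec a ha
      refine le_antisymm ?_ ?_
      · apply grank_le hG.1
        intro X hX hXsub
        by_contra hlt
        push_neg at hlt
        obtain ⟨y, hyX, hyA, hins⟩ := hG.2 (A (km a - 1)) (hFk _ (by omega)) X hX (by
          rw [hcardA _ (by omega)]; omega)
        have hyG : y ∈ Gamma F (A (km a - 1)) := ⟨hyA, hins⟩
        have hmem := hXsub hyX
        rw [mem_sdiff] at hmem
        exact hmem.2 (mem_filter.2 ⟨mem_univ y, hyG⟩)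
      · have hsub : A (km a - 1) ⊆ univ \ univ.filter (· ∈ Gamma F (A (km a - 1))) := by
          intro b hb
          refine mem_sdiff.2 ⟨mem_univ b, ?_⟩
          intro hbf
          exact ((mem_filter.1 hbf).2).1 hb
        have hg := le_grank (A (km a - 1)) (hFk _ (by omega)) hsub
        rwa [hcardA _ (by omega)] at hg
    have hranksingle : ∀ a, a ∉ A r → grank F (univ \ {a}) = r := by
      intro a ha
      refine le_antisymm (grank_le hG.1 (fun X hX _ => hbase X hX)) ?_
      have hsub : A r ⊆ univ \ {a} := by
        intro b hb
        refine mem_sdiff.2 ⟨mem_univ b, ?_⟩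
        rw [mem_singleton]
        rintro rfl
        exact ha hb
      have := le_grank (A r) (hFk r le_rfl) hsub
      rwa [hcardA r le_rfl] at this
    -- the dual solution
    set e := Fintype.equivFin α with he
    set pair : α → Finset α × ℝ := fun a =>
      if a ∈ A r then (univ.filter (· ∈ Gamma F (A (km a - 1))), d (km a) - d (km a - 1))
      else ({a}, c a - cov a) with hpair
    have hY0 : ∀ a : α, 0 ≤ (pair a).2 := by
      intro a
      by_cases ha : a ∈ A r
      · obtain ⟨hm1, hm2, hm3, hm4, hm5, hm6⟩ := hkmspec a ha
        rw [hpair]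
        simp only [if_pos ha]
        have := hdmono (km a - 1) (km a) (by omega) hm2
        linarith
      · rw [hpair]
        simp only [if_neg ha]
        have := hcovle a
        linarith
    have hconstr : ∀ x : α, ∑ a : α, (if x ∈ (pair a).1 then (pair a).2 else 0) = c x := by
      intro x
      have hsplit := Finset.sum_filter_add_sum_filter_not univ (· ∈ A r)
        (fun a => if x ∈ (pair a).1 then (pair a).2 else 0)
      rw [← hsplit]
      have hfil1 : univ.filter (· ∈ A r) = A r := by
        ext b
        simp
      have hpart1 : ∑ a ∈ univ.filter (· ∈ A r), (if x ∈ (pair a).1 then (pair a).2 else 0)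
          = cov x := by
        rw [hfil1]
        have hterm : ∀ a ∈ A r, (if x ∈ (pair a).1 then (pair a).2 else 0)
            = (if x ∈ Gamma F (A (km a - 1)) then d (km a) - d (km a - 1) else 0) := by
          intro a ha
          rw [hpair]
          simp only [if_pos ha]
          by_cases hx : x ∈ Gamma F (A (km a - 1))
          · rw [if_pos hx, if_pos (mem_filter.2 ⟨mem_univ x, hx⟩)]
          · rw [if_neg hx, if_neg (fun hmem => hx (mem_filter.1 hmem).2)]
        rw [Finset.sum_congr rfl hterm]
        rw [hsumA (fun a => if x ∈ Gamma F (A (km a - 1)) then d (km a) - d (km a - 1) else 0)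
          r le_rfl]
        simp only [hcov]
        apply Finset.sum_congr rfl
        intro j hj
        rw [hkmxs j (mem_range.1 hj), Nat.add_sub_cancel]
      have hpart2 : ∑ a ∈ univ.filter (fun a => ¬ (a ∈ A r)),
          (if x ∈ (pair a).1 then (pair a).2 else 0)
          = (if x ∈ A r then 0 else c x - cov x) := by
        have hterm : ∀ a ∈ univ.filter (fun a => ¬ (a ∈ A r)),
            (if x ∈ (pair a).1 then (pair a).2 else 0)
            = (if x = a then c a - cov a else 0) := by
          intro a ha
          have ha' : a ∉ A r := (mem_filter.1 ha).2
          rw [hpair]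
          simp only [if_neg ha']
          by_cases hx : x = a
          · rw [if_pos hx, if_pos (mem_singleton.2 hx)]
          · rw [if_neg hx, if_neg (fun hmem => hx (mem_singleton.1 hmem))]
        rw [Finset.sum_congr rfl hterm, Finset.sum_ite_eq]
        by_cases hx : x ∈ A r
        · have hnot : x ∉ univ.filter (fun a => ¬ (a ∈ A r)) := by
            simp [hx]
          rw [if_neg hnot, if_pos hx]
        · have hyes : x ∈ univ.filter (fun a => ¬ (a ∈ A r)) := by
            simp [hx]
          rw [if_pos hyes, if_neg hx]
      rw [hpart1, hpart2]
      by_cases hx : x ∈ A r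
      · rw [if_pos hx, hcoveq x hx]
        ring
      · rw [if_neg hx]
        ring
    refine ⟨fun i => (pair (e.symm i)).1, fun i => (pair (e.symm i)).2,
      fun i => hY0 (e.symm i), ?_, ?_⟩
    · intro x
      rw [Finset.sum_filter]
      rw [Equiv.sum_comp e.symm (fun a => if x ∈ (pair a).1 then (pair a).2 else 0)]
      exact hconstr x
    · -- objective
      have hswap := Equiv.sum_comp e.symm (fun a =>
        ((grank F univ : ℝ) - (grank F (univ \ (pair a).1) : ℝ)) * (pair a).2)
      rw [hswap]
      have hobjval : ∑ a : α, ((grank F univ : ℝ) - (grank F (univ \ (pair a).1) : ℝ)) * (pair a).2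
          = ∑ j ∈ range r, d (j+1) := by
        have hsplit := Finset.sum_filter_add_sum_filter_not univ (· ∈ A r)
          (fun a => ((grank F univ : ℝ) - (grank F (univ \ (pair a).1) : ℝ)) * (pair a).2)
        rw [← hsplit]
        have hfil1 : univ.filter (· ∈ A r) = A r := by
          ext b
          simp
        have hpart2 : ∑ a ∈ univ.filter (fun a => ¬ (a ∈ A r)),
            ((grank F univ : ℝ) - (grank F (univ \ (pair a).1) : ℝ)) * (pair a).2 = 0 := by
          apply Finset.sum_eq_zero
          intro a ha
          have ha' : a ∉ A r := (mem_filter.1 ha).2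
          have h1 : (pair a).1 = {a} := by
            rw [hpair]
            simp only [if_neg ha']
          rw [h1, hranksingle a ha', hrankuniv]
          ring
        have hpart1 : ∑ a ∈ univ.filter (· ∈ A r),
            ((grank F univ : ℝ) - (grank F (univ \ (pair a).1) : ℝ)) * (pair a).2
            = ∑ j ∈ range r, d (j+1) := by
          rw [hfil1]
          have hterm : ∀ a ∈ A r,
              ((grank F univ : ℝ) - (grank F (univ \ (pair a).1) : ℝ)) * (pair a).2
              = ((r:ℝ) - ((km a - 1 : ℕ) : ℝ)) * (d (km a) - d (km a - 1)) := by
            intro a ha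
            have h1 : (pair a).1 = univ.filter (· ∈ Gamma F (A (km a - 1))) := by
              rw [hpair]
              simp only [if_pos ha]
            have h2 : (pair a).2 = d (km a) - d (km a - 1) := by
              rw [hpair]
              simp only [if_pos ha]
            rw [h1, h2, hrankcut a ha, hrankuniv]
          rw [Finset.sum_congr rfl hterm]
          rw [hsumA (fun a => ((r:ℝ) - ((km a - 1 : ℕ):ℝ)) * (d (km a) - d (km a - 1))) r le_rfl]
          have hterm2 : ∀ j ∈ range r,
              ((r:ℝ) - ((km (xs (j+1)) - 1 : ℕ):ℝ)) * (d (km (xs (j+1))) - d (km (xs (j+1)) - 1))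
              = ((r:ℝ) - (j:ℝ)) * (d (j+1) - d j) := by
            intro j hj
            rw [hkmxs j (mem_range.1 hj), Nat.add_sub_cancel]
          rw [Finset.sum_congr rfl hterm2]
          exact abel_sum d hd0 r
        rw [hpart1, hpart2]
        ring
      have hwAr : w (A r) = ∑ j ∈ range r, d (j+1) := by
        rw [hw (A r) (hFk r le_rfl)]
        have hterm : ∀ a ∈ A r, (∑ yy ∈ P (A r) a, c yy) = d (km a) := by
          intro a ha
          obtain ⟨hm1, hm2, hm3, hm4, hm5, hm6⟩ := hkmspec a ha
          have hstab2 : P (A (km a)) a = P (A r) a :=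
            path_stab hI hP (hFk (km a) hm2) (hFk r le_rfl) (hmono (km a) r hm2 le_rfl) hm1
          rw [← hstab2, hdpos (km a) (by omega), hm5]
        rw [Finset.sum_congr rfl hterm, hsumA (fun a => d (km a)) r le_rfl]
        apply Finset.sum_congr rfl
        intro j hj
        rw [hkmxs j (mem_range.1 hj)]
      have hweak : ∑ a : α, ((grank F univ : ℝ) - (grank F (univ \ (pair a).1) : ℝ)) * (pair a).2
          ≤ w Bm := by
        rw [hw Bm hBm.1]
        have hexp : ∑ xx ∈ Bm, ∑ yy ∈ P Bm xx, c yy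
            = ∑ a : α, (∑ xx ∈ Bm, (((P Bm xx).filter (· ∈ (pair a).1)).card : ℝ)) * (pair a).2 := by
          calc ∑ xx ∈ Bm, ∑ yy ∈ P Bm xx, c yy
              = ∑ xx ∈ Bm, ∑ yy ∈ P Bm xx,
                  ∑ a : α, (if yy ∈ (pair a).1 then (pair a).2 else 0) := by
                refine Finset.sum_congr rfl ?_
                intro xx _
                refine Finset.sum_congr rfl ?_
                intro yy _
                exact (hconstr yy).symm
            _ = ∑ xx ∈ Bm, ∑ a : α, ∑ yy ∈ P Bm xx,
                  (if yy ∈ (pair a).1 then (pair a).2 else 0) := by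
                refine Finset.sum_congr rfl ?_
                intro xx _
                exact Finset.sum_comm
            _ = ∑ a : α, ∑ xx ∈ Bm, ∑ yy ∈ P Bm xx,
                  (if yy ∈ (pair a).1 then (pair a).2 else 0) := Finset.sum_comm
            _ = ∑ a : α, ∑ xx ∈ Bm,
                  (((P Bm xx).filter (· ∈ (pair a).1)).card : ℝ) * (pair a).2 := by
                refine Finset.sum_congr rfl ?_
                intro a _
                refine Finset.sum_congr rfl ?_
                intro xx _
                rw [← Finset.sum_filter, Finset.sum_const, nsmul_eq_mul]
            _ = ∑ a : α, (∑ xx ∈ Bm, (((P Bm xx).filter (· ∈ (pair a).1)).card : ℝ))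
                  * (pair a).2 := by
                refine Finset.sum_congr rfl ?_
                intro a _
                rw [Finset.sum_mul]
        rw [hexp]
        apply Finset.sum_le_sum
        intro a _
        apply mul_le_mul_of_nonneg_right _ (hY0 a)
        have hcnt := count_ge hG hU hP hBm.1 ((pair a).1)
        rw [hcardBm] at hcnt
        rw [hrankuniv]
        exact hcnt
      have hBmAr : w Bm ≤ w (A r) := by
        refine hmin (A r) ⟨hFk r le_rfl, ?_⟩
        intro C hC
        rw [hcardA r le_rfl]
        exact hbase C hC
      rw [hobjval]
      rw [hobjval] at hweak
      linarith [hBmAr, hwAr, hweak]
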